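/- For every K > 0 there exists a constant C = C(K) > 0 such that: if γ : ℝ² → (0,∞) is a C² function satisfying |∇γ(y)| ≤ K γ(y) for all y and |∂^β γ(y)| ≤ K γ(y) for all y and all multi-indices β with |β| = 2, then for every Schwartz function f on ℝ²: sup_{y ∈ ℝ²} f(y)² √(γ(y)) ≤ C [ ‖f‖_{L²(ℝ²)} (∫_{ℝ²} |∂²f/∂y₁∂y₂|² γ dy)^{1/2} + ∫_{ℝ²} (|∇f|² + f²) √γ dy ]. -/

import Mathlib

open MeasureTheory
open scoped ENNReal NNReal

noncomputable section

/-- Partial derivative ∂_{y₁} of a real-valued function on ℝ². -/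
def pdr1 (f : ℝ × ℝ → ℝ) : ℝ × ℝ → ℝ := fun y => fderiv ℝ f y (1, 0)

/-- Partial derivative ∂_{y₂} of a real-valued function on ℝ². -/
def pdr2 (f : ℝ × ℝ → ℝ) : ℝ × ℝ → ℝ := fun y => fderiv ℝ f y (0, 1)

/-- A positive `C²` weight `γ` whose first and second logarithmic
derivatives are bounded by `K`. -/
structure IsGoodWeight (K : ℝ) (γ : ℝ × ℝ → ℝ) : Prop where
  contDiff : ContDiff ℝ 2 γ
  pos : ∀ y, 0 < γ y
  grad_le : ∀ y, Real.sqrt ((pdr1 γ y) ^ 2 + (pdr2 γ y) ^ 2) ≤ K * γ y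
  d11_le : ∀ y, |pdr1 (pdr1 γ) y| ≤ K * γ y
  d12_le : ∀ y, |pdr1 (pdr2 γ) y| ≤ K * γ y
  d21_le : ∀ y, |pdr2 (pdr1 γ) y| ≤ K * γ y
  d22_le : ∀ y, |pdr2 (pdr2 γ) y| ≤ K * γ y

/-! Write `w = √γ` and `g = f² w`; once the right-hand side is finite, `g` and `∂₁ g` are
integrable. Integrating `∂₁ g` along horizontal lines and then `∂₂ ∂₁ g` along vertical lines bounds
`g(y)` by `∫ |∂₂ ∂₁ g|`. The logarithmic derivatives of `w` are bounded in terms of those of `γ`, so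
`|∂₂ ∂₁ g| ≤ 2 |f| |∂₂ ∂₁ f| w + C (|∇f|² + f²) w`, and Cauchy–Schwarz bounds the integral of the
first term by `‖f‖_{L²} (∫ |∂₂ ∂₁ f|² γ)^{1/2}`. -/

open Set

section PartialDerivatives

variable {h : ℝ × ℝ → ℝ}

lemma hasDerivAt_pdr1 {y : ℝ × ℝ} (hd : DifferentiableAt ℝ h y) :
    HasDerivAt (fun x => h (x, y.2)) (pdr1 h y) y.1 :=
  hd.hasFDerivAt.comp_hasDerivAt y.1 ((hasDerivAt_id _).prodMk (hasDerivAt_const _ _))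

lemma hasDerivAt_pdr2 {y : ℝ × ℝ} (hd : DifferentiableAt ℝ h y) :
    HasDerivAt (fun t => h (y.1, t)) (pdr2 h y) y.2 :=
  hd.hasFDerivAt.comp_hasDerivAt y.2 ((hasDerivAt_const _ _).prodMk (hasDerivAt_id _))

lemma contDiff_pdr1 {m n : WithTop ℕ∞} (hh : ContDiff ℝ n h) (hmn : m + 1 ≤ n) :
    ContDiff ℝ m (pdr1 h) :=
  (hh.fderiv_right hmn).clm_apply contDiff_const

lemma contDiff_pdr2 {m n : WithTop ℕ∞} (hh : ContDiff ℝ n h) (hmn : m + 1 ≤ n) :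
    ContDiff ℝ m (pdr2 h) :=
  (hh.fderiv_right hmn).clm_apply contDiff_const

lemma continuous_pdr1 {n : WithTop ℕ∞} (hh : ContDiff ℝ n h) (hn : 1 ≤ n) :
    Continuous (pdr1 h) :=
  (contDiff_pdr1 (m := 0) hh (by simpa using hn)).continuous

lemma continuous_pdr2 {n : WithTop ℕ∞} (hh : ContDiff ℝ n h) (hn : 1 ≤ n) :
    Continuous (pdr2 h) :=
  (contDiff_pdr2 (m := 0) hh (by simpa using hn)).continuous

lemma continuous_pdr2_pdr1 {n : WithTop ℕ∞} (hh : ContDiff ℝ n h) (hn : 2 ≤ n) :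
    Continuous (pdr2 (pdr1 h)) :=
  continuous_pdr2 (contDiff_pdr1 (m := 1) hh (le_of_eq_of_le (by norm_num) hn)) le_rfl

lemma pdr1_sqrt {y : ℝ × ℝ} (hd : DifferentiableAt ℝ h y) (hy : h y ≠ 0) :
    pdr1 (fun z => √(h z)) y = pdr1 h y / (2 * √(h y)) := by
  simp only [pdr1, (hd.hasFDerivAt.sqrt hy).fderiv, smul_apply, smul_eq_mul]
  ring

lemma pdr2_sqrt {y : ℝ × ℝ} (hd : DifferentiableAt ℝ h y) (hy : h y ≠ 0) :
    pdr2 (fun z => √(h z)) y = pdr2 h y / (2 * √(h y)) := by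
  simp only [pdr2, (hd.hasFDerivAt.sqrt hy).fderiv, smul_apply, smul_eq_mul]
  ring

lemma pdr2_pdr1_sqrt (hh : ContDiff ℝ 2 h) (hpos : ∀ z, 0 < h z) (y : ℝ × ℝ) :
    pdr2 (pdr1 (fun z => √(h z))) y =
      pdr2 (pdr1 h) y / (2 * √(h y)) - pdr1 h y * pdr2 h y / (4 * √(h y) ^ 3) := by
  have hd : Differentiable ℝ h := hh.differentiable two_ne_zero
  have hd₁ : Differentiable ℝ (pdr1 h) :=
    (contDiff_pdr1 (m := 1) hh (by norm_num)).differentiable one_ne_zero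
  have hds₁ : Differentiable ℝ (pdr1 fun z => √(h z)) :=
    (contDiff_pdr1 (m := 1) (hh.sqrt fun z => (hpos z).ne') (by norm_num)).differentiable
      one_ne_zero
  have hS : 0 < √(h y) := Real.sqrt_pos.2 (hpos y)
  have hquot := (hasDerivAt_pdr2 (hd₁ y)).div
    (((hasDerivAt_pdr2 (hd y)).sqrt (hpos y).ne').const_mul 2) (mul_pos two_pos hS).ne'
  have hline := hasDerivAt_pdr2 (hds₁ y)
  have hpdr1 : pdr1 (fun z => √(h z)) = fun z => pdr1 h z / (2 * √(h z)) :=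
    funext fun z => pdr1_sqrt (hd z) (hpos z).ne'
  rw [hpdr1] at hline ⊢
  rw [hline.unique hquot]
  field_simp
  ring

end PartialDerivatives

namespace IsGoodWeight

variable {K : ℝ} {γ : ℝ × ℝ → ℝ}

lemma differentiable (hγ : IsGoodWeight K γ) : Differentiable ℝ γ :=
  hγ.contDiff.differentiable (by norm_num)

lemma abs_pdr1_le (hγ : IsGoodWeight K γ) (y : ℝ × ℝ) : |pdr1 γ y| ≤ K * γ y :=
  (Real.abs_le_sqrt (le_add_of_nonneg_right (sq_nonneg _))).trans (hγ.grad_le y)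

lemma abs_pdr2_le (hγ : IsGoodWeight K γ) (y : ℝ × ℝ) : |pdr2 γ y| ≤ K * γ y :=
  (Real.abs_le_sqrt (le_add_of_nonneg_left (sq_nonneg _))).trans (hγ.grad_le y)

lemma contDiff_sqrt (hγ : IsGoodWeight K γ) : ContDiff ℝ 2 fun y => √(γ y) :=
  hγ.contDiff.sqrt fun y => (hγ.pos y).ne'

lemma abs_div_two_sqrt_le (hγ : IsGoodWeight K γ) {p : ℝ} {y : ℝ × ℝ} (hp : |p| ≤ K * γ y) :
    |p / (2 * √(γ y))| ≤ K / 2 * √(γ y) := by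
  have hS : 0 < √(γ y) := Real.sqrt_pos.2 (hγ.pos y)
  rw [abs_div, abs_of_pos (by positivity : (0:ℝ) < 2 * √(γ y)), div_le_iff₀ (by positivity)]
  linear_combination hp - K * Real.sq_sqrt (hγ.pos y).le

lemma abs_pdr1_sqrt_le (hγ : IsGoodWeight K γ) (y : ℝ × ℝ) :
    |pdr1 (fun z => √(γ z)) y| ≤ K / 2 * √(γ y) := by
  rw [pdr1_sqrt (hγ.differentiable y) (hγ.pos y).ne']
  exact hγ.abs_div_two_sqrt_le (hγ.abs_pdr1_le y)

lemma abs_pdr2_sqrt_le (hγ : IsGoodWeight K γ) (y : ℝ × ℝ) :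
    |pdr2 (fun z => √(γ z)) y| ≤ K / 2 * √(γ y) := by
  rw [pdr2_sqrt (hγ.differentiable y) (hγ.pos y).ne']
  exact hγ.abs_div_two_sqrt_le (hγ.abs_pdr2_le y)

lemma abs_pdr2_pdr1_sqrt_le (hγ : IsGoodWeight K γ) (y : ℝ × ℝ) :
    |pdr2 (pdr1 (fun z => √(γ z))) y| ≤ (K / 2 + K ^ 2 / 4) * √(γ y) := by
  have hS : 0 < √(γ y) := Real.sqrt_pos.2 (hγ.pos y)
  have hSγ : √(γ y) ^ 2 = γ y := Real.sq_sqrt (hγ.pos y).le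
  have h12 : |pdr1 γ y * pdr2 γ y| ≤ K * γ y * (K * γ y) := by
    rw [abs_mul]
    exact mul_le_mul (hγ.abs_pdr1_le y) (hγ.abs_pdr2_le y) (abs_nonneg _)
      ((abs_nonneg _).trans (hγ.abs_pdr1_le y))
  have hsecond : |pdr1 γ y * pdr2 γ y / (4 * √(γ y) ^ 3)| ≤ K ^ 2 / 4 * √(γ y) := by
    rw [abs_div, abs_of_pos (by positivity : (0:ℝ) < 4 * √(γ y) ^ 3), div_le_iff₀ (by positivity)]
    linear_combination h12 - K ^ 2 * (γ y + √(γ y) ^ 2) * hSγ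
  rw [pdr2_pdr1_sqrt hγ.contDiff hγ.pos y, add_mul]
  exact (abs_sub _ _).trans (add_le_add (hγ.abs_div_two_sqrt_le (hγ.d21_le y)) hsecond)

end IsGoodWeight

section LineIntegrals

variable {E : Type*} [NormedAddCommGroup E] [NormedSpace ℝ E] [CompleteSpace E]

lemma enorm_le_lintegral_enorm_of_hasDerivAt {h h' : ℝ → E} (hd : ∀ x, HasDerivAt h (h' x) x)
    (hi : Integrable h) (b : ℝ) : ‖h b‖ₑ ≤ ∫⁻ x, ‖h' x‖ₑ := by
  by_cases hfin : ∫⁻ x, ‖h' x‖ₑ = ⊤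
  · exact hfin ▸ le_top
  have hi' : Integrable h' := by
    refine ⟨?_, lt_top_iff_ne_top.2 hfin⟩
    rw [show h' = deriv h from funext fun x => (hd x).deriv.symm]
    exact aestronglyMeasurable_deriv h _
  have hlim := tendsto_zero_of_hasDerivAt_of_integrableOn_Iic (a := b) (fun x _ => hd x)
    hi'.integrableOn hi.integrableOn
  have hb : ∫ x in Iic b, h' x = h b := by
    rw [integral_Iic_of_hasDerivAt_of_tendsto' (fun x _ => hd x) hi'.integrableOn hlim, sub_zero]
  calc ‖h b‖ₑ = ‖∫ x in Iic b, h' x‖ₑ := by rw [hb]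
    _ ≤ ∫⁻ x in Iic b, ‖h' x‖ₑ := enorm_integral_le_lintegral_enorm _
    _ ≤ ∫⁻ x, ‖h' x‖ₑ := setLIntegral_le_lintegral _ _

lemma le_of_ae_le_of_continuous {φ : ℝ → ℝ≥0∞} {M : ℝ≥0∞} (hφ : Continuous φ)
    (h : ∀ᵐ x, φ x ≤ M) (x : ℝ) : φ x ≤ M := by
  have huniv : {x | φ x ≤ M} = univ := by
    rw [← (isClosed_le hφ continuous_const).closure_eq, (Measure.dense_of_ae h).closure_eq]
  exact eq_univ_iff_forall.1 huniv x

lemma enorm_le_lintegral_enorm_of_hasDerivAt_mixed {g g₁ g₁₂ : ℝ × ℝ → E} (hg : Continuous g)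
    (hg₁₂ : AEStronglyMeasurable g₁₂)
    (hd₁ : ∀ y : ℝ × ℝ, HasDerivAt (fun x => g (x, y.2)) (g₁ y) y.1)
    (hd₁₂ : ∀ y : ℝ × ℝ, HasDerivAt (fun t => g₁ (y.1, t)) (g₁₂ y) y.2)
    (hgi : Integrable g) (hg₁i : Integrable g₁) (y : ℝ × ℝ) :
    ‖g y‖ₑ ≤ ∫⁻ z, ‖g₁₂ z‖ₑ := by
  rw [Measure.volume_eq_prod] at hgi hg₁i hg₁₂ ⊢
  have hcolumn : ∀ᵐ s, ∀ b, ‖g₁ (s, b)‖ₑ ≤ ∫⁻ t, ‖g₁₂ (s, t)‖ₑ :=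
    hg₁i.prod_right_ae.mono fun s hs =>
      enorm_le_lintegral_enorm_of_hasDerivAt (fun t => hd₁₂ (s, t)) hs
  have hrow : ∀ᵐ b, ∀ a, ‖g (a, b)‖ₑ ≤ ∫⁻ z, ‖g₁₂ z‖ₑ ∂(volume.prod volume) := by
    filter_upwards [hgi.prod_left_ae] with b hb a
    calc ‖g (a, b)‖ₑ ≤ ∫⁻ s, ‖g₁ (s, b)‖ₑ :=
          enorm_le_lintegral_enorm_of_hasDerivAt (fun x => hd₁ (x, b)) hb a
      _ ≤ ∫⁻ s, ∫⁻ t, ‖g₁₂ (s, t)‖ₑ := lintegral_mono_ae (hcolumn.mono fun s hs => hs b)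
      _ = ∫⁻ z, ‖g₁₂ z‖ₑ ∂(volume.prod volume) := (lintegral_prod _ hg₁₂.enorm).symm
  exact le_of_ae_le_of_continuous (by fun_prop) (hrow.mono fun b hb => hb y.1) y.2

end LineIntegrals

section CauchySchwarz

lemma lintegral_enorm_mul_le_eLpNorm_mul_eLpNorm {α E F : Type*} [MeasurableSpace α]
    {μ : Measure α} [NormedAddCommGroup E] [NormedAddCommGroup F] {u : α → E} {v : α → F}
    (hu : AEStronglyMeasurable u μ) (hv : AEStronglyMeasurable v μ) :
    ∫⁻ x, ‖u x‖ₑ * ‖v x‖ₑ ∂μ ≤ eLpNorm u 2 μ * eLpNorm v 2 μ := by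
  simpa [eLpNorm_eq_lintegral_rpow_enorm_toReal] using
    ENNReal.lintegral_mul_le_Lp_mul_Lq μ Real.HolderConjugate.two_two hu.enorm hv.enorm

lemma eLpNorm_two_eq_lintegral_ofReal_sq {α : Type*} [MeasurableSpace α] {μ : Measure α}
    (v : α → ℝ) : eLpNorm v 2 μ = (∫⁻ x, ENNReal.ofReal (v x ^ 2) ∂μ) ^ (1 / 2 : ℝ) := by
  simp [eLpNorm_eq_lintegral_rpow_enorm_toReal, Real.enorm_eq_ofReal_abs,
    ← ENNReal.ofReal_pow]

lemma lintegral_abs_mul_abs_mul_sqrt_le {α : Type*} [MeasurableSpace α] {μ : Measure α}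
    {u v ρ : α → ℝ} (hu : AEStronglyMeasurable u μ) (hv : AEStronglyMeasurable v μ)
    (hρ : AEStronglyMeasurable ρ μ) (hρ₀ : ∀ x, 0 ≤ ρ x) :
    ∫⁻ x, ENNReal.ofReal (|u x| * |v x| * √(ρ x)) ∂μ ≤
      eLpNorm u 2 μ * (∫⁻ x, ENNReal.ofReal (v x ^ 2 * ρ x) ∂μ) ^ (1 / 2 : ℝ) := by
  have hsq (x : α) : √(ρ x) ^ 2 = ρ x := Real.sq_sqrt (hρ₀ x)
  calc _ = ∫⁻ x, ‖u x‖ₑ * ‖v x * √(ρ x)‖ₑ ∂μ := by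
        refine lintegral_congr fun x => ?_
        rw [Real.enorm_eq_ofReal_abs, Real.enorm_eq_ofReal_abs, ← ENNReal.ofReal_mul (abs_nonneg _),
          abs_mul, abs_of_nonneg (Real.sqrt_nonneg _), mul_assoc]
    _ ≤ eLpNorm u 2 μ * eLpNorm (fun x => v x * √(ρ x)) 2 μ :=
        lintegral_enorm_mul_le_eLpNorm_mul_eLpNorm hu
          (hv.mul (Real.continuous_sqrt.comp_aestronglyMeasurable hρ))
    _ = _ := by simp only [eLpNorm_two_eq_lintegral_ofReal_sq, mul_pow, hsq]

end CauchySchwarz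

section WeightedSquare

lemma abs_deriv_sq_mul_le {u u₁ s s₁ L : ℝ} (hs : 0 ≤ s) (hs₁ : |s₁| ≤ L * s) :
    |2 * u * u₁ * s + u ^ 2 * s₁| ≤ (1 + L) * ((u₁ ^ 2 + u ^ 2) * s) := by
  have hLs : 0 ≤ L * s := (abs_nonneg _).trans hs₁
  calc |2 * u * u₁ * s + u ^ 2 * s₁| ≤ |2 * u * u₁ * s| + |u ^ 2 * s₁| := abs_add_le _ _
    _ = |2 * u * u₁| * s + u ^ 2 * |s₁| := by
        rw [abs_mul, abs_mul (u ^ 2), abs_of_nonneg hs, abs_sq]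
    _ ≤ (u₁ ^ 2 + u ^ 2) * s + u ^ 2 * (L * s) := by
        gcongr
        rw [abs_mul, abs_mul, abs_two]
        nlinarith [two_mul_le_add_sq |u| |u₁|, sq_abs u, sq_abs u₁]
    _ ≤ (1 + L) * ((u₁ ^ 2 + u ^ 2) * s) := by nlinarith [sq_nonneg u₁]

lemma abs_mixed_deriv_sq_mul_le {u u₁ u₂ u₂₁ s s₁ s₂ s₂₁ L M : ℝ} (hs : 0 ≤ s) (hL : 0 ≤ L)
    (hM : 0 ≤ M) (hs₁ : |s₁| ≤ L * s) (hs₂ : |s₂| ≤ L * s) (hs₂₁ : |s₂₁| ≤ M * s) :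
    |2 * (u₂ * u₁ + u * u₂₁) * s + 2 * u * u₁ * s₂ + 2 * u * u₂ * s₁ + u ^ 2 * s₂₁| ≤
      2 * (|u| * |u₂₁| * s) + (1 + 2 * L + M) * ((u₁ ^ 2 + u₂ ^ 2 + u ^ 2) * s) := by
  have amgm (a b : ℝ) : 2 * (|a| * |b|) ≤ a ^ 2 + b ^ 2 := by
    simpa only [sq_abs, mul_assoc] using two_mul_le_add_sq |a| |b|
  have h₀ : |2 * (u₂ * u₁ + u * u₂₁) * s| ≤ (u₂ ^ 2 + u₁ ^ 2) * s + 2 * (|u| * |u₂₁| * s) := by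
    rw [abs_mul, abs_mul, abs_two, abs_of_nonneg hs]
    have := abs_add_le (u₂ * u₁) (u * u₂₁)
    rw [abs_mul, abs_mul] at this
    nlinarith [amgm u₂ u₁]
  have h₁ : |2 * u * u₁ * s₂| ≤ (u ^ 2 + u₁ ^ 2) * (L * s) := by
    rw [abs_mul, abs_mul, abs_mul, abs_two, mul_assoc 2]
    exact mul_le_mul (amgm u u₁) hs₂ (abs_nonneg _) (by positivity)
  have h₂ : |2 * u * u₂ * s₁| ≤ (u ^ 2 + u₂ ^ 2) * (L * s) := by
    rw [abs_mul, abs_mul, abs_mul, abs_two, mul_assoc 2]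
    exact mul_le_mul (amgm u u₂) hs₁ (abs_nonneg _) (by positivity)
  have h₃ : |u ^ 2 * s₂₁| ≤ u ^ 2 * (M * s) := by
    rw [abs_mul, abs_sq]
    exact mul_le_mul_of_nonneg_left hs₂₁ (sq_nonneg u)
  calc _ ≤ |2 * (u₂ * u₁ + u * u₂₁) * s| + |2 * u * u₁ * s₂| + |2 * u * u₂ * s₁| + |u ^ 2 * s₂₁| :=
        (abs_add_le _ _).trans (add_le_add_left (abs_add_three _ _ _) _)
    _ ≤ _ := by nlinarith [mul_nonneg hL hs, mul_nonneg hM hs, mul_nonneg (sq_nonneg u₁) hs,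
        mul_nonneg (sq_nonneg u₂) hs, mul_nonneg (sq_nonneg u) hs]

variable {f w : ℝ × ℝ → ℝ}

lemma hasDerivAt_sq_mul_pdr1 (hf : Differentiable ℝ f) (hw : Differentiable ℝ w) (y : ℝ × ℝ) :
    HasDerivAt (fun x => f (x, y.2) ^ 2 * w (x, y.2))
      (2 * f y * pdr1 f y * w y + f y ^ 2 * pdr1 w y) y.1 := by
  refine (((hasDerivAt_pdr1 (hf y)).pow 2).mul (hasDerivAt_pdr1 (hw y))).congr_deriv ?_
  simp only [Pi.pow_apply]
  ring

lemma hasDerivAt_sq_mul_pdr2_pdr1 (hf : ContDiff ℝ 2 f) (hw : ContDiff ℝ 2 w) (y : ℝ × ℝ) :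
    HasDerivAt
      (fun t => 2 * f (y.1, t) * pdr1 f (y.1, t) * w (y.1, t) + f (y.1, t) ^ 2 * pdr1 w (y.1, t))
      (2 * (pdr2 f y * pdr1 f y + f y * pdr2 (pdr1 f) y) * w y + 2 * f y * pdr1 f y * pdr2 w y +
        2 * f y * pdr2 f y * pdr1 w y + f y ^ 2 * pdr2 (pdr1 w) y) y.2 := by
  have hd {h : ℝ × ℝ → ℝ} (hh : ContDiff ℝ 1 h) :=
    hasDerivAt_pdr2 (hh.differentiable one_ne_zero y)
  have hf₀ := hd (hf.of_le (by norm_num))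
  have hw₀ := hd (hw.of_le (by norm_num))
  have hf₁ := hd (contDiff_pdr1 (m := 1) hf (by norm_num))
  have hw₁ := hd (contDiff_pdr1 (m := 1) hw (by norm_num))
  refine ((((hf₀.const_mul 2).mul hf₁).mul hw₀).add ((hf₀.pow 2).mul hw₁)).congr_deriv ?_
  simp only [Pi.pow_apply, Pi.mul_apply]
  ring

lemma ofReal_sq_mul_le_lintegral {L M : ℝ} (hf : ContDiff ℝ 2 f)
    (hw : ContDiff ℝ 2 w) (hw₀ : ∀ y, 0 ≤ w y) (hL : 0 ≤ L) (hM : 0 ≤ M)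
    (hw₁ : ∀ y, |pdr1 w y| ≤ L * w y) (hw₂ : ∀ y, |pdr2 w y| ≤ L * w y)
    (hw₂₁ : ∀ y, |pdr2 (pdr1 w) y| ≤ M * w y)
    (hE : ∫⁻ y, ENNReal.ofReal ((pdr1 f y ^ 2 + pdr2 f y ^ 2 + f y ^ 2) * w y) ≠ ⊤)
    (y : ℝ × ℝ) :
    ENNReal.ofReal (f y ^ 2 * w y) ≤
      2 * (∫⁻ z, ENNReal.ofReal (|f z| * |pdr2 (pdr1 f) z| * w z)) +
        ENNReal.ofReal (1 + 2 * L + M) *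
          ∫⁻ z, ENNReal.ofReal ((pdr1 f z ^ 2 + pdr2 f z ^ 2 + f z ^ 2) * w z) := by
  have cf := hf.continuous
  have cf₁ := continuous_pdr1 hf one_le_two
  have cf₂ := continuous_pdr2 hf one_le_two
  have cf₂₁ := continuous_pdr2_pdr1 hf le_rfl
  have cw := hw.continuous
  have cw₁ := continuous_pdr1 hw one_le_two
  have cw₂ := continuous_pdr2 hw one_le_two
  have cw₂₁ := continuous_pdr2_pdr1 hw le_rfl
  replace hE := (lintegral_ofReal_ne_top_iff_integrable (by fun_prop)
    (ae_of_all _ fun z => mul_nonneg (by positivity) (hw₀ z))).1 hE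
  have hg : Integrable fun z => f z ^ 2 * w z := by
    refine hE.mono' (by fun_prop) (ae_of_all _ fun z => ?_)
    rw [Real.norm_of_nonneg (mul_nonneg (sq_nonneg _) (hw₀ z))]
    exact mul_le_mul_of_nonneg_right (by nlinarith [sq_nonneg (pdr1 f z), sq_nonneg (pdr2 f z)])
      (hw₀ z)
  have hg₁ : Integrable fun z => 2 * f z * pdr1 f z * w z + f z ^ 2 * pdr1 w z := by
    refine (hE.const_mul (1 + L)).mono' (by fun_prop) (ae_of_all _ fun z => ?_)
    refine (abs_deriv_sq_mul_le (hw₀ z) (hw₁ z)).trans ?_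
    gcongr
    · exact hw₀ z
    · nlinarith [sq_nonneg (pdr2 f z)]
  calc ENNReal.ofReal (f y ^ 2 * w y) = ‖f y ^ 2 * w y‖ₑ :=
        (Real.enorm_of_nonneg (mul_nonneg (sq_nonneg _) (hw₀ y))).symm
    _ ≤ ∫⁻ z, ‖2 * (pdr2 f z * pdr1 f z + f z * pdr2 (pdr1 f) z) * w z +
          2 * f z * pdr1 f z * pdr2 w z + 2 * f z * pdr2 f z * pdr1 w z +
          f z ^ 2 * pdr2 (pdr1 w) z‖ₑ :=
        enorm_le_lintegral_enorm_of_hasDerivAt_mixed (by fun_prop)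
          (Continuous.aestronglyMeasurable (by fun_prop))
          (hasDerivAt_sq_mul_pdr1 (hf.differentiable two_ne_zero) (hw.differentiable two_ne_zero))
          (hasDerivAt_sq_mul_pdr2_pdr1 hf hw) hg hg₁ y
    _ ≤ ∫⁻ z, (2 * ENNReal.ofReal (|f z| * |pdr2 (pdr1 f) z| * w z) +
          ENNReal.ofReal (1 + 2 * L + M) *
            ENNReal.ofReal ((pdr1 f z ^ 2 + pdr2 f z ^ 2 + f z ^ 2) * w z)) := by
        refine lintegral_mono fun z => ?_
        rw [Real.enorm_eq_ofReal_abs, ← ENNReal.ofReal_ofNat 2, ← ENNReal.ofReal_mul zero_le_two,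
          ← ENNReal.ofReal_mul (by linarith)]
        exact (ENNReal.ofReal_le_ofReal (abs_mixed_deriv_sq_mul_le (hw₀ z) hL hM (hw₁ z) (hw₂ z)
          (hw₂₁ z))).trans ENNReal.ofReal_add_le
    _ = _ := by
        rw [lintegral_add_left (by fun_prop), lintegral_const_mul _ (by fun_prop),
          lintegral_const_mul _ (by fun_prop)]

end WeightedSquare

/-- weighted 2D `L^∞` estimate
`sup f²√γ ≤ C (‖f‖_{L²} (∫ |∂²f/∂y₁∂y₂|² γ)^{1/2} + ∫ (|∇f|² + f²) √γ)`. -/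
theorem stmt16 (K : ℝ) (hK : 0 < K) :
    ∃ C : ℝ, 0 < C ∧ ∀ γ : ℝ × ℝ → ℝ, IsGoodWeight K γ →
      ∀ f : SchwartzMap (ℝ × ℝ) ℝ,
        (⨆ y : ℝ × ℝ, ENNReal.ofReal (f y ^ 2 * Real.sqrt (γ y)))
          ≤ ENNReal.ofReal C *
              (eLpNorm (⇑f) 2 volume *
                  (∫⁻ y : ℝ × ℝ,
                      ENNReal.ofReal ((pdr2 (pdr1 ⇑f) y) ^ 2 * γ y)) ^ ((1:ℝ)/2) +
                ∫⁻ y : ℝ × ℝ,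
                  ENNReal.ofReal
                    (((pdr1 ⇑f y) ^ 2 + (pdr2 ⇑f y) ^ 2 + f y ^ 2) *
                      Real.sqrt (γ y))) := by
  refine ⟨3 + 2 * K + K ^ 2, by positivity, fun γ hγ f => ?_⟩
  have hf : ContDiff ℝ 2 f := f.smooth 2
  set X := eLpNorm f 2 volume * (∫⁻ y, ENNReal.ofReal (pdr2 (pdr1 f) y ^ 2 * γ y)) ^ (1 / 2 : ℝ)
  set Y := ∫⁻ y, ENNReal.ofReal ((pdr1 f y ^ 2 + pdr2 f y ^ 2 + f y ^ 2) * √(γ y))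
  by_cases hY : Y = ⊤
  · rw [hY, add_top, ENNReal.mul_top (ENNReal.ofReal_pos.2 (by positivity)).ne']
    exact le_top
  have hsup := ofReal_sq_mul_le_lintegral hf hγ.contDiff_sqrt (fun y => Real.sqrt_nonneg _)
    (by positivity) (by positivity) hγ.abs_pdr1_sqrt_le hγ.abs_pdr2_sqrt_le
    hγ.abs_pdr2_pdr1_sqrt_le hY
  have hCS := lintegral_abs_mul_abs_mul_sqrt_le (μ := volume) f.continuous.aestronglyMeasurable
    (continuous_pdr2_pdr1 hf le_rfl).aestronglyMeasurable
    hγ.contDiff.continuous.aestronglyMeasurable (fun y => (hγ.pos y).le)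
  calc _ ≤ 2 * X + ENNReal.ofReal (1 + 2 * (K / 2) + (K / 2 + K ^ 2 / 4)) * Y :=
        iSup_le fun y => (hsup y).trans (by gcongr)
    _ ≤ ENNReal.ofReal (3 + 2 * K + K ^ 2) * (X + Y) := by
        rw [mul_add]
        gcongr ?_ * _ + ?_ * _
        · rw [← ENNReal.ofReal_ofNat 2]
          exact ENNReal.ofReal_le_ofReal (by nlinarith)
        · exact ENNReal.ofReal_le_ofReal (by nlinarith)
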